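/- Let x ∈ C be a codeword, (x^f,τ^f) ∈ P(H), and (x^r,τ^r) the relative solution of (x^f,τ^f) to x. Then x^r_i = |x^f_i − x_i| for every i = 0,…,n−1. -/

import Mathlib

open scoped BigOperators

/-- Symbol pairs: elements of Σ² with Σ = {0,1} represented as `ZMod 2`. -/
abbrev Pair := ZMod 2 × ZMod 2

/-- Cyclic successor index: `i + 1 (mod n)`. -/
def nxt {n : ℕ} (i : Fin n) : Fin n := ⟨(i.val + 1) % n, Nat.mod_lt _ i.pos⟩

/-- Embedding of a binary vector into `ℝ^n`. -/
def emb {n : ℕ} (x : Fin n → ZMod 2) : Fin n → ℝ := fun i => ((x i).val : ℝ)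

/-- The binary linear code with parity-check matrix `H`. -/
def code {m n : ℕ} (H : Fin m → Fin n → ZMod 2) : Set (Fin n → ZMod 2) :=
  {x | ∀ j, ∑ i, H j i * x i = 0}

/-- The local (single parity check) code of row `j` of `H`. -/
def localCode {m n : ℕ} (H : Fin m → Fin n → ZMod 2) (j : Fin m) : Set (Fin n → ZMod 2) :=
  {x | ∑ i, H j i * x i = 0}

/-- The fundamental polytope `Q(H)`: intersection of convex hulls of local codes. -/
def fundPolytope {m n : ℕ} (H : Fin m → Fin n → ZMod 2) : Set (Fin n → ℝ) :=
  ⋂ j, convexHull ℝ (emb '' localCode H j)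

/-- The LP feasible region `P(H)` of pairs `(x, τ)`. -/
def feasible {m n : ℕ} (H : Fin m → Fin n → ZMod 2) :
    Set ((Fin n → ℝ) × (Fin n → Pair → ℝ)) :=
  {xt | (∀ i ab, xt.2 i ab ∈ Set.Icc (0 : ℝ) 1) ∧
        (∀ i, ∑ ab : Pair, xt.2 i ab = 1) ∧
        (∀ i, xt.1 i = xt.2 i (1, 0) + xt.2 i (1, 1)) ∧
        (∀ i, xt.1 (nxt i) = xt.2 i (0, 1) + xt.2 i (1, 1)) ∧
        xt.1 ∈ fundPolytope H}

/-- `T(x)`: the indicator vector of the symbol-pair read vector `π(x)`. -/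
def indic {n : ℕ} (x : Fin n → ZMod 2) : Fin n → Pair → ℝ :=
  fun i ab => if (x i, x (nxt i)) = ab then 1 else 0

/-- Channel transition probability `p(y | a)` of the symbol-pair read channel. -/
noncomputable def chan (p : ℝ) (y a : Pair) : ℝ := if y = a then 1 - p else p / 3

/-- Likelihood `p(ŷ | x)` of the received pair vector `ŷ` given codeword `x`. -/
noncomputable def lik {n : ℕ} (p : ℝ) (y : Fin n → Pair) (x : Fin n → ZMod 2) : ℝ :=
  ∏ i, chan p (y i) (x i, x (nxt i))

/-- The cost vector `λ = Λ(ŷ)`, `λ_{i,(a,b)} = -ln p(ŷ_i | (a,b))`. -/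
noncomputable def Lam {n : ℕ} (p : ℝ) (y : Fin n → Pair) : Fin n → Pair → ℝ :=
  fun i ab => -Real.log (chan p (y i) ab)

/-- The pairing `⟨λ, τ⟩ = Σ_i Σ_{(a,b)} λ_{i,(a,b)} τ_{i,(a,b)}`. -/
def innerP {n : ℕ} (l t : Fin n → Pair → ℝ) : ℝ := ∑ i, ∑ ab : Pair, l i ab * t i ab

/-- The fractional pair weight `W_fp`. -/
def Wfp {n : ℕ} (x : Fin n → ℝ) : ℝ := ∑ i, max (x i) (x (nxt i))

/-- The set `B(x)` of received vectors causing LP decoding failure when `x` was sent. -/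
def Bset {m n : ℕ} (H : Fin m → Fin n → ZMod 2) (p : ℝ) (x : Fin n → ZMod 2) :
    Set (Fin n → Pair) :=
  {y | ∃ xt ∈ feasible H, xt.1 ≠ emb x ∧ innerP (Lam p y) xt.2 ≤ innerP (Lam p y) (indic x)}

/-
Translating τ by the read pair `(x_i, x_{i+1})` leaves the marginal `τ_{(1,·)}` unchanged when
`x_i = 0` and swaps it with `τ_{(0,·)} = 1 - x^f_i` when `x_i = 1`; nonnegativity of `τ` keeps
`x^f_i` in `[0, 1]`, so in both cases the result is `|x^f_i - x_i|`.
-/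

lemma sum_pair (τ : Pair → ℝ) :
    ∑ ab : Pair, τ ab = τ (0, 0) + τ (0, 1) + τ (1, 0) + τ (1, 1) := by
  simp only [Fintype.sum_prod_type]
  change ∑ a : Fin 2, ∑ b : Fin 2, τ (a, b) = _
  simp only [Fin.sum_univ_two, ← add_assoc]
  rfl

lemma zmod_two_eq_zero_or_one : ∀ a : ZMod 2, a = 0 ∨ a = 1 := by decide

lemma add_shift_snd (τ : Pair → ℝ) (a b : ZMod 2) :
    τ (a, b) + τ (a, 1 + b) = τ (a, 0) + τ (a, 1) := by
  obtain rfl | rfl := zmod_two_eq_zero_or_one b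
  · rfl
  · exact add_comm _ _

lemma fst_marginal_add_eq_abs (τ : Pair → ℝ) (hτ : ∀ ab, 0 ≤ τ ab) (hsum : ∑ ab, τ ab = 1)
    (c : Pair) :
    τ ((1, 0) + c) + τ ((1, 1) + c) = |τ (1, 0) + τ (1, 1) - (c.1.val : ℝ)| := by
  obtain ⟨a, b⟩ := c
  rw [sum_pair] at hsum
  have h00 := hτ (0, 0); have h01 := hτ (0, 1); have h10 := hτ (1, 0); have h11 := hτ (1, 1)
  simp only [Prod.mk_add_mk, zero_add, add_shift_snd]
  obtain rfl | rfl := zmod_two_eq_zero_or_one a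
  · rw [add_zero, ZMod.val_zero, Nat.cast_zero, sub_zero, abs_of_nonneg (by linarith)]
  · rw [show (1 : ZMod 2) + 1 = 0 from rfl, ZMod.val_one, Nat.cast_one,
      abs_of_nonpos (by linarith)]
    linarith

theorem stmt7_general {n m : ℕ} (H : Fin m → Fin n → ZMod 2)
    (x : Fin n → ZMod 2)
    (xf : Fin n → ℝ) (tf : Fin n → Pair → ℝ)
    (hfeas : (xf, tf) ∈ feasible H) :
    ∀ i, tf i ((1, 0) + (x i, x (nxt i))) + tf i ((1, 1) + (x i, x (nxt i))) =
      |xf i - emb x i| := by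
  obtain ⟨hτ, hsum, hxf, -, -⟩ := hfeas
  intro i
  rw [show xf i = _ from hxf i]
  exact fst_marginal_add_eq_abs (tf i) (fun ab => (hτ i ab).1) (hsum i) (x i, x (nxt i))

/-- the `x`-part of the relative solution satisfies `x^r_i = |x^f_i - x_i|`. -/
theorem stmt7 {n m : ℕ} (hn : 2 ≤ n) (H : Fin m → Fin n → ZMod 2)
    (x : Fin n → ZMod 2) (hx : x ∈ code H)
    (xf : Fin n → ℝ) (tf : Fin n → Pair → ℝ)
    (hfeas : (xf, tf) ∈ feasible H) :
    ∀ i, tf i ((1, 0) + (x i, x (nxt i))) + tf i ((1, 1) + (x i, x (nxt i))) =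
      |xf i - emb x i| :=
  stmt7_general H x xf tf hfeas
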